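/- For every positive integer k there exist constants c_k > 0 and N_k such that for all n ≥ N_k: c_k · Σ_{i=0}^{⌊kn/(2k+1)⌋} C(n,i) ≤ 2^n - vex(n, C_{2k+1}) ≤ Σ_{i=0}^{⌊kn/(2k+1)⌋} C(n,i), where vex(n, C_{2k+1}) is the maximum size of a family F ⊆ 2^[n] inducing a C_{2k+1}-free subgraph of the Kneser cube. -/

import Mathlib

/-- Adjacency in the Kneser cube: two distinct disjoint subsets of `[n]`. -/
def knAdj {n : ℕ} (A B : Finset (Fin n)) : Prop := A ≠ B ∧ Disjoint A B

/-- The induced subgraph of the Kneser cube on the family `F` contains a copy of the graph `G`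
(as a subgraph). -/
def containsCopy {V : Type*} (G : SimpleGraph V) {n : ℕ} (F : Finset (Finset (Fin n))) : Prop :=
  ∃ f : V → Finset (Fin n), Function.Injective f ∧ (∀ v, f v ∈ F) ∧
    ∀ u v, G.Adj u v → knAdj (f u) (f v)

/-- `vex(n, G)`: the maximum size of a family `F ⊆ 2^[n]` such that the induced subgraph
of the Kneser cube on `F` is `G`-free. -/
noncomputable def vex (n : ℕ) {V : Type*} (G : SimpleGraph V) : ℕ :=
  sSup {m | ∃ F : Finset (Finset (Fin n)), ¬ containsCopy G F ∧ F.card = m}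

open Finset

/-!
Sets of size more than `kn/(2k+1)` form a `C_{2k+1}`-free family: consecutive sets of a copy of
`C_{2k+1}` are disjoint, so every point lies in at most `k` of its `2k+1` sets.

Conversely, blowing up the odd cycle `j ↦ {j+1, j+3, …, j+2k-1}` of the Kneser graph `K(2k+1, k)`
by a factor `b = ⌊n/(2k+1)⌋` gives a copy of `C_{2k+1}` made of `kb`-sets. Its images under all
permutations of `[n]` are copies as well, so a `C_{2k+1}`-free family misses one of the `2k+1` sets
of each image; averaging over permutations (Katona's cycle method) shows that it misses at least a
`1/(2k+1)` fraction of all `kb`-sets. Finally, `∑_{i ≤ kn/(2k+1)} C(n, i)` is at most a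
constant (depending on `k`) times `C(n, kb)`.
-/

namespace Nat

lemma sum_range_succ_le_mul_of_mul_le {a : ℕ → ℕ} {k t : ℕ}
    (h : ∀ i < t, (k + 1) * a i ≤ k * a (i + 1)) :
    ∑ i ∈ range (t + 1), a i ≤ (k + 1) * a t := by
  induction t with
  | zero => simpa using Nat.le_mul_of_pos_left (a 0) k.succ_pos
  | succ t ih =>
    have hsum := ih fun i hi => h i (by omega)
    have hstep := h t (by omega)
    rw [sum_range_succ]
    linarith

lemma succ_mul_choose_le_mul_choose_succ {n k i : ℕ} (h : (k + 1) * (i + 1) ≤ k * (n - i)) :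
    (k + 1) * n.choose i ≤ k * n.choose (i + 1) := by
  refine Nat.le_of_mul_le_mul_right ?_ i.succ_pos
  calc (k + 1) * n.choose i * (i + 1) = (k + 1) * (i + 1) * n.choose i := by ring
    _ ≤ k * (n - i) * n.choose i := Nat.mul_le_mul_right _ h
    _ = k * (n.choose i * (n - i)) := by ring
    _ = k * n.choose (i + 1) * (i + 1) := by rw [← choose_succ_right_eq]; ring

lemma choose_succ_le_mul_choose {n c i : ℕ} (h : n ≤ c * (i + 1)) :
    n.choose (i + 1) ≤ c * n.choose i := by
  refine Nat.le_of_mul_le_mul_right ?_ i.succ_pos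
  calc n.choose (i + 1) * (i + 1) = n.choose i * (n - i) := choose_succ_right_eq n i
    _ ≤ n.choose i * (c * (i + 1)) := Nat.mul_le_mul_left _ ((n.sub_le i).trans h)
    _ = c * n.choose i * (i + 1) := by ring

lemma choose_add_le_pow_mul_choose {n c m : ℕ} (h : n ≤ c * (m + 1)) (d : ℕ) :
    n.choose (m + d) ≤ c ^ d * n.choose m := by
  induction d with
  | zero => simp
  | succ d ih =>
    calc n.choose (m + d + 1) ≤ c * n.choose (m + d) :=
          choose_succ_le_mul_choose (h.trans (Nat.mul_le_mul_left c (by omega)))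
      _ ≤ c * (c ^ d * n.choose m) := Nat.mul_le_mul_left c ih
      _ = c ^ (d + 1) * n.choose m := by ring

end Nat

/-- With `t = ⌊kn/(2k+1)⌋` and `b = ⌊n/(2k+1)⌋`: the terms `C(n, i)`, `i ≤ t`, decay geometrically
with ratio `k/(k+1)` going down from `t`, and `t` exceeds `kb` by at most `k`. -/
lemma sum_range_choose_le {n k : ℕ} (hk : 1 ≤ k) (hn : 2 * k + 1 ≤ n) :
    ∑ i ∈ range (k * n / (2 * k + 1) + 1), n.choose i ≤
      (k + 1) * ((4 * k + 2) ^ k * n.choose (k * (n / (2 * k + 1)))) := by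
  set t := k * n / (2 * k + 1) with ht_def
  set b := n / (2 * k + 1)
  obtain ⟨r, hr, hnb⟩ : ∃ r < 2 * k + 1, n = (2 * k + 1) * b + r :=
    ⟨n % (2 * k + 1), Nat.mod_lt _ (by omega), (Nat.div_add_mod n _).symm⟩
  have hb : 1 ≤ b := (Nat.one_le_div_iff (by omega)).2 hn
  have htb : t = k * b + k * r / (2 * k + 1) := by
    rw [ht_def, show k * n = (2 * k + 1) * (k * b) + k * r by rw [hnb]; ring,
      Nat.mul_add_div (by omega)]
  have hd : k * r / (2 * k + 1) ≤ k :=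
    Nat.div_le_of_le_mul (Nat.mul_le_mul_left k hr.le |>.trans_eq (mul_comm _ _))
  have hdecay : ∀ i < t, (k + 1) * n.choose i ≤ k * n.choose (i + 1) := by
    intro i hi
    refine Nat.succ_mul_choose_le_mul_choose_succ ?_
    have ht : (2 * k + 1) * t ≤ k * n := (mul_comm _ _).trans_le (Nat.div_mul_le_self _ _)
    have hin : i ≤ n := by nlinarith
    zify [hin] at ht ⊢
    nlinarith
  calc ∑ i ∈ range (t + 1), n.choose i ≤ (k + 1) * n.choose t :=
        Nat.sum_range_succ_le_mul_of_mul_le hdecay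
    _ ≤ (k + 1) * ((4 * k + 2) ^ k * n.choose (k * b)) := by
      refine Nat.mul_le_mul_left _ ?_
      have hcm : n ≤ (4 * k + 2) * (k * b + 1) := by rw [hnb]; nlinarith
      rw [htb]
      exact (Nat.choose_add_le_pow_mul_choose hcm _).trans
        (Nat.mul_le_mul_right _ (Nat.pow_le_pow_right (by omega) hd))

lemma SimpleGraph.cycleGraph_adj_iff_eq_add_one {m : ℕ} [NeZero m] (hm : 2 ≤ m) {u v : Fin m} :
    (cycleGraph m).Adj u v ↔ u = v + 1 ∨ v = u + 1 := by
  have h1 : (1 : Fin m).val = 1 := by rw [Fin.val_one']; exact Nat.mod_eq_of_lt hm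
  simp only [cycleGraph_adj', ← h1, ← Fin.ext_iff, sub_eq_iff_eq_add, add_comm (1 : Fin m)]

section KneserOddCycle

open Fin.CommRing

lemma Fin.natCast_eq_natCast_iff {m a b : ℕ} [NeZero m] :
    (a : Fin m) = (b : Fin m) ↔ a ≡ b [MOD m] := by
  rw [Fin.ext_iff, Fin.val_natCast, Fin.val_natCast]
  rfl

/-- The odd cycle `j ↦ {j + 1, j + 3, …, j + 2k - 1}` of the Kneser graph `K(2k+1, k)`:
consecutive sets are disjoint by parity of the offsets. -/
def kneserOddCycle (k : ℕ) (j : Fin (2 * k + 1)) : Finset (Fin (2 * k + 1)) :=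
  univ.image fun i : Fin k => j + ((2 * i + 1 : ℕ) : Fin (2 * k + 1))

lemma mem_kneserOddCycle {k : ℕ} {j x : Fin (2 * k + 1)} :
    x ∈ kneserOddCycle k j ↔ ∃ i < k, j + ((2 * i + 1 : ℕ) : Fin (2 * k + 1)) = x := by
  simp only [kneserOddCycle, mem_image, mem_univ, true_and]
  exact ⟨fun ⟨i, hi⟩ => ⟨i, i.isLt, hi⟩, fun ⟨i, hik, hi⟩ => ⟨⟨i, hik⟩, hi⟩⟩

lemma card_kneserOddCycle (k : ℕ) (j : Fin (2 * k + 1)) : #(kneserOddCycle k j) = k := by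
  rw [kneserOddCycle, card_image_of_injective, card_univ, Fintype.card_fin]
  intro i i' h
  have := Fin.natCast_eq_natCast_iff.1 (add_right_injective j h)
  have := this.eq_of_lt_of_lt (by omega) (by omega)
  exact Fin.ext (by omega)

lemma disjoint_kneserOddCycle_add_one (k : ℕ) (j : Fin (2 * k + 1)) :
    Disjoint (kneserOddCycle k j) (kneserOddCycle k (j + 1)) := by
  refine disjoint_left.2 fun x hx hx' => ?_
  obtain ⟨i, hi, rfl⟩ := mem_kneserOddCycle.1 hx
  obtain ⟨i', hi', h⟩ := mem_kneserOddCycle.1 hx'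
  have h' : ((2 * i' + 2 : ℕ) : Fin (2 * k + 1)) = ((2 * i + 1 : ℕ) : Fin (2 * k + 1)) := by
    push_cast at h ⊢
    linear_combination h
  have := (Fin.natCast_eq_natCast_iff.1 h').eq_of_lt_of_lt (by omega) (by omega)
  omega

lemma kneserOddCycle_injective (k : ℕ) : Function.Injective (kneserOddCycle k) := by
  intro j j' h
  rcases Nat.eq_zero_or_pos k with rfl | hk
  · exact Subsingleton.elim (α := Fin 1) j j'
  have hmem : ∀ j, j + 1 ∈ kneserOddCycle k j := fun j =>
    mem_kneserOddCycle.2 ⟨0, hk, by simp⟩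
  obtain ⟨a, ha, hj⟩ := mem_kneserOddCycle.1 (h ▸ hmem j)
  obtain ⟨c, hc, hj'⟩ := mem_kneserOddCycle.1 (h ▸ hmem j')
  have hsum :
      ((2 * (1 + (a + c)) : ℕ) : Fin (2 * k + 1)) = ((2 * 1 : ℕ) : Fin (2 * k + 1)) := by
    have := congrArg₂ (· + ·) hj hj'
    push_cast at this ⊢
    linear_combination this
  have hac := Nat.ModEq.cancel_left_of_coprime (by simp) (Fin.natCast_eq_natCast_iff.1 hsum)
  have := hac.eq_of_lt_of_lt (by omega) (by omega)
  obtain rfl : a = 0 := by omega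
  simpa using hj.symm

end KneserOddCycle

lemma exists_kneserOddCycle_blowup {n k b : ℕ} (hb : 1 ≤ b) (hn : (2 * k + 1) * b ≤ n) :
    ∃ T : Fin (2 * k + 1) → Finset (Fin n), Function.Injective T ∧ (∀ j, #(T j) = k * b) ∧
      ∀ j, Disjoint (T j) (T (j + 1)) := by
  have : Nonempty (Fin b) := ⟨⟨0, hb⟩⟩
  let e : Fin (2 * k + 1) × Fin b ↪ Fin n :=
    finProdFinEquiv.toEmbedding.trans (Fin.castLEEmb hn)
  refine ⟨fun j => (kneserOddCycle k j ×ˢ univ).map e, fun j j' h => ?_, fun j => ?_,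
    fun j => ?_⟩
  · apply kneserOddCycle_injective k
    rw [← product_image_fst (s := kneserOddCycle k j) (t := (univ : Finset (Fin b)))
      univ_nonempty, map_injective e h, product_image_fst univ_nonempty]
  · rw [card_map, card_product, card_kneserOddCycle, card_univ, Fintype.card_fin]
  · rw [disjoint_map, disjoint_product]
    exact Or.inl (disjoint_kneserOddCycle_add_one k j)

lemma containsCopy_cycleGraph {n k : ℕ} (hk : 1 ≤ k) {F : Finset (Finset (Fin n))}
    {T : Fin (2 * k + 1) → Finset (Fin n)} (hT : Function.Injective T)
    (hdisj : ∀ j, Disjoint (T j) (T (j + 1))) (hTF : ∀ j, T j ∈ F) :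
    containsCopy (SimpleGraph.cycleGraph (2 * k + 1)) F := by
  refine ⟨T, hT, hTF, fun u v huv => ⟨hT.ne huv.ne, ?_⟩⟩
  rcases (SimpleGraph.cycleGraph_adj_iff_eq_add_one (by omega)).1 huv with rfl | rfl
  exacts [(hdisj v).symm, hdisj u]

lemma Fin.two_mul_card_le_of_add_one_notMem {m : ℕ} [NeZero m] {S : Finset (Fin m)}
    (h : ∀ j ∈ S, j + 1 ∉ S) : 2 * #S ≤ m := by
  have hdisj : Disjoint S (S.map (addRightEmbedding 1)) := by
    refine disjoint_right.2 fun x hx hxS => ?_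
    obtain ⟨j, hj, rfl⟩ := mem_map.1 hx
    exact h j hj hxS
  simpa [two_mul, card_union_of_disjoint hdisj] using
    card_le_univ (S ∪ S.map (addRightEmbedding 1))

lemma sum_card_le_of_disjoint_add_one {α : Type*} [Fintype α] {m : ℕ} [NeZero m]
    {f : Fin m → Finset α} (h : ∀ j, Disjoint (f j) (f (j + 1))) :
    ∑ j, #(f j) ≤ Fintype.card α * (m / 2) := by
  classical
  have hpoint : ∀ x : α, #{j | x ∈ f j} ≤ m / 2 := fun x => by
    have := Fin.two_mul_card_le_of_add_one_notMem (S := {j | x ∈ f j}) fun j hj hj1 =>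
      disjoint_left.1 (h j) (mem_filter.1 hj).2 (mem_filter.1 hj1).2
    omega
  calc ∑ j, #(f j) = ∑ x, #{j | x ∈ f j} := by
        have hcount : ∀ j, #(f j) = ∑ x, if x ∈ f j then 1 else 0 := fun j => by
          rw [← card_filter, filter_univ_mem]
        simp only [hcount, card_filter]
        exact sum_comm
    _ ≤ ∑ _x : α, m / 2 := sum_le_sum fun x _ => hpoint x
    _ = Fintype.card α * (m / 2) := by rw [sum_const, card_univ, smul_eq_mul]

lemma not_containsCopy_cycleGraph_of_lt_card {n k t : ℕ} (hk : 1 ≤ k)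
    (ht : k * n < (2 * k + 1) * (t + 1)) :
    ¬ containsCopy (SimpleGraph.cycleGraph (2 * k + 1))
      ({A | t < #A} : Finset (Finset (Fin n))) := by
  rintro ⟨f, -, hfF, hf⟩
  have hsum := sum_card_le_of_disjoint_add_one fun j => (hf j (j + 1)
    ((SimpleGraph.cycleGraph_adj_iff_eq_add_one (by omega)).2 (Or.inr rfl))).2
  have hbig : (2 * k + 1) * (t + 1) ≤ ∑ j, #(f j) := by
    simpa using card_nsmul_le_sum univ (fun j => #(f j)) (t + 1) fun j _ =>
      (mem_filter.1 (hfF j)).2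
  rw [Fintype.card_fin, show (2 * k + 1) / 2 = k by omega] at hsum
  linarith

section PermutationAveraging

open scoped Nat

variable {α : Type*} [Fintype α] [DecidableEq α]

lemma card_perm_map_eq_le (T S : Finset α) (hS : #S = #T) :
    #{σ : Equiv.Perm α | T.map σ.toEmbedding = S} ≤ (#T)! * (Fintype.card α - #T)! := by
  have hmem : ∀ σ : Equiv.Perm α, T.map σ.toEmbedding = S → ∀ x, σ x ∈ S ↔ x ∈ T := by
    rintro σ rfl x
    simp
  let restrict (σ : {σ : Equiv.Perm α // T.map σ.toEmbedding = S}) : (T ↪ S) × (↥Tᶜ ↪ ↥Sᶜ) :=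
    (⟨fun x => ⟨σ.1 x, (hmem σ.1 σ.2 x).2 x.2⟩,
        fun x y h => Subtype.ext (σ.1.injective (congrArg Subtype.val h))⟩,
      ⟨fun x => ⟨σ.1 x, mem_compl.2 fun h => mem_compl.1 x.2 ((hmem σ.1 σ.2 x).1 h)⟩,
        fun x y h => Subtype.ext (σ.1.injective (congrArg Subtype.val h))⟩)
  have hrestrict : Function.Injective restrict := by
    rintro ⟨σ, hσ⟩ ⟨τ, hτ⟩ h
    refine Subtype.ext (Equiv.ext fun x => ?_)
    by_cases hx : x ∈ T
    · exact congrArg (fun e => (e.1 ⟨x, hx⟩ : α)) h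
    · exact congrArg (fun e => (e.2 ⟨x, mem_compl.2 hx⟩ : α)) h
  calc #{σ : Equiv.Perm α | T.map σ.toEmbedding = S}
      = Fintype.card {σ : Equiv.Perm α // T.map σ.toEmbedding = S} :=
        (Fintype.card_subtype _).symm
    _ ≤ Fintype.card ((T ↪ S) × (↥Tᶜ ↪ ↥Sᶜ)) := Fintype.card_le_of_injective _ hrestrict
    _ = (#T)! * (Fintype.card α - #T)! := by
      simp [Fintype.card_embedding_eq, hS, Nat.descFactorial_self]

lemma choose_le_card_mul_card_sdiff {ι : Type*} [Fintype ι] {m : ℕ} {T : ι → Finset α}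
    (hT : ∀ i, #(T i) = m) {F : Finset (Finset α)}
    (hF : ∀ σ : Equiv.Perm α, ∃ i, (T i).map σ.toEmbedding ∉ F) :
    (Fintype.card α).choose m ≤ Fintype.card ι * #(powersetCard m univ \ F) := by
  set D := powersetCard m univ \ F
  obtain ⟨i₀, -⟩ := hF 1
  have hm : m ≤ Fintype.card α := hT i₀ ▸ card_le_univ _
  have hbad : ∀ i, #{σ : Equiv.Perm α | (T i).map σ.toEmbedding ∉ F} ≤
      #D * (m ! * (Fintype.card α - m)!) := fun i =>
    calc #{σ : Equiv.Perm α | (T i).map σ.toEmbedding ∉ F}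
        ≤ #(D.biUnion fun S => {σ : Equiv.Perm α | (T i).map σ.toEmbedding = S}) :=
          card_le_card fun σ hσ => mem_biUnion.2
            ⟨_, by simp [D, hT, (mem_filter.1 hσ).2], mem_filter.2 ⟨mem_univ _, rfl⟩⟩
      _ ≤ ∑ S ∈ D, #{σ : Equiv.Perm α | (T i).map σ.toEmbedding = S} := card_biUnion_le
      _ ≤ ∑ _S ∈ D, m ! * (Fintype.card α - m)! := sum_le_sum fun S hS => hT i ▸
          card_perm_map_eq_le _ _ ((mem_powersetCard.1 (mem_sdiff.1 hS).1).2.trans (hT i).symm)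
      _ = #D * (m ! * (Fintype.card α - m)!) := by rw [sum_const, smul_eq_mul]
  have hall : (Fintype.card α)! ≤ Fintype.card ι * (#D * (m ! * (Fintype.card α - m)!)) :=
    calc (Fintype.card α)! = #(univ : Finset (Equiv.Perm α)) := by
          rw [card_univ, Fintype.card_perm]
      _ ≤ #(univ.biUnion fun i => {σ : Equiv.Perm α | (T i).map σ.toEmbedding ∉ F}) :=
          card_le_card fun σ _ => by simpa using hF σ
      _ ≤ ∑ i, #{σ : Equiv.Perm α | (T i).map σ.toEmbedding ∉ F} := card_biUnion_le
      _ ≤ ∑ _i : ι, #D * (m ! * (Fintype.card α - m)!) := sum_le_sum fun i _ => hbad i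
      _ = Fintype.card ι * (#D * (m ! * (Fintype.card α - m)!)) := by
          rw [sum_const, card_univ, smul_eq_mul]
  refine Nat.le_of_mul_le_mul_right (c := m ! * (Fintype.card α - m)!) ?_
    (Nat.mul_pos (Nat.factorial_pos _) (Nat.factorial_pos _))
  rwa [← mul_assoc, Nat.choose_mul_factorial_mul_factorial hm, mul_assoc]

end PermutationAveraging

lemma choose_le_mul_card_sdiff_of_not_containsCopy {n k b : ℕ} (hk : 1 ≤ k) (hb : 1 ≤ b)
    (hn : (2 * k + 1) * b ≤ n) {F : Finset (Finset (Fin n))}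
    (hF : ¬ containsCopy (SimpleGraph.cycleGraph (2 * k + 1)) F) :
    n.choose (k * b) ≤ (2 * k + 1) * #(powersetCard (k * b) univ \ F) := by
  obtain ⟨T, hT, hcard, hdisj⟩ := exists_kneserOddCycle_blowup hb hn
  have := choose_le_card_mul_card_sdiff hcard (F := F) fun σ => by
    by_contra! h
    exact hF (containsCopy_cycleGraph hk ((map_injective _).comp hT)
      (fun j => (disjoint_map _).2 (hdisj j)) h)
  simpa using this

section Vex

variable {V : Type*}

lemma bddAbove_vex_set (n : ℕ) (G : SimpleGraph V) :
    BddAbove {m | ∃ F : Finset (Finset (Fin n)), ¬ containsCopy G F ∧ F.card = m} :=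
  ⟨2 ^ n, by rintro _ ⟨F, -, rfl⟩; simpa using card_le_univ F⟩

lemma card_le_vex {n : ℕ} {G : SimpleGraph V} {F : Finset (Finset (Fin n))}
    (hF : ¬ containsCopy G F) : #F ≤ vex n G :=
  le_csSup (bddAbove_vex_set n G) ⟨F, hF, rfl⟩

lemma exists_card_eq_vex (n : ℕ) [Nonempty V] (G : SimpleGraph V) :
    ∃ F : Finset (Finset (Fin n)), ¬ containsCopy G F ∧ #F = vex n G := by
  have hempty : ¬ containsCopy G (∅ : Finset (Finset (Fin n))) := by
    rintro ⟨f, -, hf, -⟩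
    exact notMem_empty _ (hf (Classical.arbitrary V))
  exact Nat.sSup_mem
    (s := {m | ∃ F : Finset (Finset (Fin n)), ¬ containsCopy G F ∧ F.card = m})
    ⟨0, ∅, hempty, rfl⟩ (bddAbove_vex_set n G)

lemma vex_le_two_pow (n : ℕ) [Nonempty V] (G : SimpleGraph V) : vex n G ≤ 2 ^ n := by
  obtain ⟨F, -, hF⟩ := exists_card_eq_vex n G
  simpa [hF] using card_le_univ F

end Vex

lemma card_filter_card_le_le_sum_choose {α : Type*} [Fintype α] (t : ℕ) :
    #({A | #A ≤ t} : Finset (Finset α)) ≤ ∑ i ∈ range (t + 1), (Fintype.card α).choose i := by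
  classical
  calc #({A | #A ≤ t} : Finset (Finset α))
      ≤ #((range (t + 1)).biUnion fun i => powersetCard i univ) :=
        card_le_card fun A hA => mem_biUnion.2
          ⟨#A, mem_range.2 (Nat.lt_succ_of_le (mem_filter.1 hA).2), by simp⟩
    _ ≤ ∑ i ∈ range (t + 1), #(powersetCard i (univ : Finset α)) := card_biUnion_le
    _ = ∑ i ∈ range (t + 1), (Fintype.card α).choose i := by simp [card_powersetCard]

lemma two_pow_le_vex_add_sum_choose {n k : ℕ} (hk : 1 ≤ k) :
    2 ^ n ≤ vex n (SimpleGraph.cycleGraph (2 * k + 1)) +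
      ∑ i ∈ range (k * n / (2 * k + 1) + 1), n.choose i := by
  set t := k * n / (2 * k + 1)
  have hfree := not_containsCopy_cycleGraph_of_lt_card (n := n) (t := t) hk
    (Nat.lt_mul_div_succ _ (by omega))
  have hsmall := card_filter_card_le_le_sum_choose (α := Fin n) t
  have hsplit :=
    card_filter_add_card_filter_not (s := (univ : Finset (Finset (Fin n)))) (t < #·)
  simp only [not_lt, card_univ, Fintype.card_finset, Fintype.card_fin] at hsplit hsmall
  linarith [card_le_vex hfree]

lemma sum_range_choose_le_mul_sub_vex {n k : ℕ} (hk : 1 ≤ k) (hn : 2 * k + 1 ≤ n) :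
    ∑ i ∈ range (k * n / (2 * k + 1) + 1), n.choose i ≤
      (2 * k + 1) * ((k + 1) * (4 * k + 2) ^ k) *
        (2 ^ n - vex n (SimpleGraph.cycleGraph (2 * k + 1))) := by
  set b := n / (2 * k + 1)
  obtain ⟨F, hF, hFvex⟩ := exists_card_eq_vex n (SimpleGraph.cycleGraph (2 * k + 1))
  have hmissing := choose_le_mul_card_sdiff_of_not_containsCopy hk
    ((Nat.one_le_div_iff (by omega)).2 hn) (Nat.mul_div_le n _) hF
  have hsplit : #(powersetCard (k * b) univ \ F) ≤ 2 ^ n - #F := by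
    rw [Nat.le_sub_iff_add_le (by simpa using card_le_univ F),
      ← card_union_of_disjoint sdiff_disjoint]
    simpa using card_le_univ (powersetCard (k * b) univ \ F ∪ F)
  rw [← hFvex]
  calc _ ≤ (k + 1) * ((4 * k + 2) ^ k * n.choose (k * b)) := sum_range_choose_le hk hn
    _ ≤ (k + 1) * ((4 * k + 2) ^ k * ((2 * k + 1) * (2 ^ n - #F))) := by
      gcongr
      exact hmissing.trans (Nat.mul_le_mul_left _ hsplit)
    _ = (2 * k + 1) * ((k + 1) * (4 * k + 2) ^ k) * (2 ^ n - #F) := by ring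

/-- For every `k ≥ 1` there are constants `c_k > 0` and `N_k` such that for all `n ≥ N_k`,
`2^n - vex(n, C_{2k+1})` is within constant factors of `∑_{i=0}^{⌊kn/(2k+1)⌋} C(n,i)`. -/
theorem stmt_13 (k : ℕ) (hk : 1 ≤ k) :
    ∃ c : ℝ, 0 < c ∧ ∃ N : ℕ, ∀ n : ℕ, N ≤ n →
      c * (∑ i ∈ Finset.range (k * n / (2 * k + 1) + 1), (n.choose i : ℝ)) ≤
        2 ^ n - (vex n (SimpleGraph.cycleGraph (2 * k + 1)) : ℝ) ∧
      2 ^ n - (vex n (SimpleGraph.cycleGraph (2 * k + 1)) : ℝ) ≤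
        ∑ i ∈ Finset.range (k * n / (2 * k + 1) + 1), (n.choose i : ℝ) := by
  refine ⟨1 / ((2 * k + 1) * ((k + 1) * (4 * k + 2) ^ k)), by positivity, 2 * k + 1,
    fun n hn => ⟨?_, ?_⟩⟩
  · have hlower : (∑ i ∈ range (k * n / (2 * k + 1) + 1), (n.choose i : ℝ)) ≤
        (2 * k + 1) * ((k + 1) * (4 * k + 2) ^ k) *
          ((2 ^ n - vex n (SimpleGraph.cycleGraph (2 * k + 1)) : ℕ) : ℝ) := by
      exact_mod_cast sum_range_choose_le_mul_sub_vex hk hn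
    rw [Nat.cast_sub (vex_le_two_pow n _), Nat.cast_pow, Nat.cast_two] at hlower
    rwa [one_div, inv_mul_le_iff₀ (by positivity)]
  · rw [sub_le_iff_le_add']
    exact_mod_cast two_pow_le_vex_add_sum_choose hk
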